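/- arXiv:1310.8100 — 5 statements merged into one kernel-verified Lean document; each statement's English description precedes it below -/
import Mathlib

section
/- Let R be a commutative ring with unity and G a group. If the set Ǧ = {g − g⁻¹ : g ∈ G} of elements of the group ring RG is commutative (i.e., any two of its elements commute), then the set RG⁺ of symmetric elements of RG with respect to the classical involution is Lie metabelian. -/
/-- A subset `X` of a ring is Lie metabelian if `[[a,b],[c,d]] = 0` for all `a,b,c,d ∈ X`,
where `[a,b] = a*b - b*a`. -/
def IsLieMetabelianSet {S : Type*} [Ring S] (X : Set S) : Prop :=
  ∀ a ∈ X, ∀ b ∈ X, ∀ c ∈ X, ∀ d ∈ X,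
    (a * b - b * a) * (c * d - d * c) - (c * d - d * c) * (a * b - b * a) = 0

/-- A subset `X` of a ring is commutative if its elements commute pairwise. -/
def IsCommutativeSet {S : Type*} [Ring S] (X : Set S) : Prop :=
  ∀ a ∈ X, ∀ b ∈ X, a * b = b * a

/-- The set `RG⁺` of symmetric elements of the group ring `RG` with respect to the classical
involution determined by `g ↦ g⁻¹`: an element `α = Σ α_g g` is symmetric iff `α(g⁻¹) = α(g)`
for all `g ∈ G`. -/
def symmetricSet (R G : Type*) [CommRing R] [Group G] : Set (MonoidAlgebra R G) :=
  {α | ∀ g : G, α.coeff g⁻¹ = α.coeff g}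

/-- The set `Ǧ = {g - g⁻¹ : g ∈ G}` inside the group ring `RG`. -/
def checkSet (R G : Type*) [CommRing R] [Group G] : Set (MonoidAlgebra R G) :=
  {x | ∃ g : G, x = MonoidAlgebra.of R G g - MonoidAlgebra.of R G g⁻¹}


/-!
For symmetric `α, β` the classical involution `*` (here `mapDomain (·⁻¹)`) is an anti-automorphism,
so `βα = (αβ)*` and `[α, β] = γ - γ*` with `γ = αβ`. Every `γ - γ*` is an `R`-combination of the
elements `g - g⁻¹`, so all Lie brackets of symmetric elements lie in `span R Ǧ`, which is
commutative as soon as `Ǧ` is.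
-/

theorem commute_of_mem_span {R A : Type*} [CommSemiring R] [Ring A] [Algebra R A] {X : Set A}
    (hX : IsCommutativeSet X) {a b : A} (ha : a ∈ Submodule.span R X)
    (hb : b ∈ Submodule.span R X) : Commute a b :=
  Algebra.commute_of_mem_adjoin_of_forall_mem_commute (Algebra.span_le_adjoin R X hb) fun y hy ↦
    (Algebra.commute_of_mem_adjoin_of_forall_mem_commute (Algebra.span_le_adjoin R X ha)
      fun x hx ↦ hX y hy x hx).symm

namespace MonoidAlgebra

theorem mapDomain_inv_mul {R G : Type*} [CommSemiring R] [DivisionMonoid G] (x y : R[G]) :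
    mapDomain (·⁻¹) (x * y) = mapDomain (·⁻¹) y * mapDomain (·⁻¹) x := by
  induction x using induction_linear with
  | zero => simp
  | add x₁ x₂ h₁ h₂ => rw [add_mul, mapDomain_add, h₁, h₂, mapDomain_add, mul_add]
  | single g r =>
    induction y using induction_linear with
    | zero => simp
    | add y₁ y₂ h₁ h₂ => rw [mul_add, mapDomain_add, h₁, h₂, mapDomain_add, add_mul]
    | single h s => simp [single_mul_single, mul_comm]

theorem coeff_mapDomain_inv {R G : Type*} [Semiring R] [InvolutiveInv G] (x : R[G]) (g : G) :
    (mapDomain (·⁻¹) x).coeff g = x.coeff g⁻¹ :=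
  Finsupp.mapDomain_equiv_apply (f := Equiv.inv G) x.coeff g

end MonoidAlgebra

section GroupRing

open MonoidAlgebra

variable {R G : Type*} [CommRing R] [Group G]

theorem mem_symmetricSet_iff {α : R[G]} : α ∈ symmetricSet R G ↔ mapDomain (·⁻¹) α = α := by
  simp only [symmetricSet, Set.mem_ofPred_eq, MonoidAlgebra.ext_iff, Finsupp.ext_iff,
    coeff_mapDomain_inv]

theorem sub_mapDomain_inv_mem_span_checkSet (x : R[G]) :
    x - mapDomain (·⁻¹) x ∈ Submodule.span R (checkSet R G) := by
  induction x using induction_linear with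
  | zero => simp
  | add x y hx hy =>
    rw [mapDomain_add, add_sub_add_comm]
    exact add_mem hx hy
  | single g r =>
    have single_sub_single_inv : single g r - single g⁻¹ r = r • (of R G g - of R G g⁻¹) := by
      simp [smul_sub]
    rw [mapDomain_single, single_sub_single_inv]
    exact Submodule.smul_mem _ _ (Submodule.subset_span ⟨g, rfl⟩)

theorem lie_mem_span_checkSet {α β : R[G]} (hα : α ∈ symmetricSet R G)
    (hβ : β ∈ symmetricSet R G) : α * β - β * α ∈ Submodule.span R (checkSet R G) := by
  rw [mem_symmetricSet_iff] at hα hβ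
  have mul_rev : β * α = mapDomain (·⁻¹) (α * β) := by rw [mapDomain_inv_mul, hα, hβ]
  exact mul_rev ▸ sub_mapDomain_inv_mem_span_checkSet (α * β)

end GroupRing

theorem lie_metabelian_of_check_commutative (R G : Type*) [CommRing R] [Group G]
    (h : IsCommutativeSet (checkSet R G)) :
    IsLieMetabelianSet (symmetricSet R G) := by
  intro a ha b hb c hc d hd
  exact sub_eq_zero.2 <|
    commute_of_mem_span h (lie_mem_span_checkSet ha hb) (lie_mem_span_checkSet hc hd)
end

section
/- Let R be a commutative ring with unity of characteristic 0 and G a group. If G has an abelian subgroup B of index 2 and an element x of order 4 such that x⁻¹bx = b⁻¹ for every b ∈ B, then the set RG⁺ of symmetric elements of the group ring RG with respect to the classical involution is Lie metabelian. -/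
/-!
An element of `B` inverted by `x` under conjugation is an involution, and `x² ≠ 1`, so `x ∉ B`
and `G = B ∪ Bx`. As `x` inverts the abelian group `B`, every `b ∈ B` and `c ∉ B` satisfy
`b c = c b⁻¹`; summing over a symmetric element, whose coefficients at `b` and `b⁻¹` agree, this
shows that a symmetric element supported in `B` commutes with every element supported outside
`B`. Splitting symmetric `α, β` into their parts on `B` and off `B`, the bracket `[α, β]`
therefore reduces to the bracket of the parts off `B`, which is supported in `(Bx)(Bx) = B`.
All brackets thus lie in the commutative subring `RB`.
-/

theorem Subgroup.mul_eq_mul_inv_of_index_two {G : Type*} [Group G] {B : Subgroup G}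
    (hBab : ∀ a ∈ B, ∀ b ∈ B, a * b = b * a) (hBidx : B.index = 2) {x : G} (hxB : x ∉ B)
    (hconj : ∀ b ∈ B, x⁻¹ * b * x = b⁻¹) {b c : G} (hb : b ∈ B) (hc : c ∉ B) :
    b * c = c * b⁻¹ := by
  obtain ⟨y, hy, rfl⟩ : ∃ y ∈ B, y * x = c :=
    ⟨c * x⁻¹, (mul_mem_iff_of_index_two hBidx).2 (iff_of_false hc (inv_mem_iff.not.2 hxB)),
      inv_mul_cancel_right c x⟩
  calc b * (y * x) = y * x * (x⁻¹ * b * x) := by rw [← mul_assoc, hBab b hb y hy]; group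
    _ = y * x * b⁻¹ := by rw [hconj b hb]

theorem Subgroup.notMem_of_conj_eq_inv {G : Type*} [Group G] {B : Subgroup G} {x : G}
    (hconj : ∀ b ∈ B, x⁻¹ * b * x = b⁻¹) (hx : x ^ 2 ≠ 1) : x ∉ B := by
  intro hxB
  have hinv : x = x⁻¹ := by simpa using hconj x hxB
  exact hx (by rw [pow_two]; nth_rewrite 1 [hinv]; exact inv_mul_cancel x)

namespace MonoidAlgebra

variable {R G : Type*}

theorem mul_comm_of_forall_mem_support_commute [CommSemiring R] [Mul G] {α β : MonoidAlgebra R G}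
    (h : ∀ g ∈ α.coeff.support, ∀ g' ∈ β.coeff.support, g * g' = g' * g) : α * β = β * α := by
  rw [mul_def, mul_def, Finsupp.sum_comm]
  refine Finsupp.sum_congr fun g' hg' => Finsupp.sum_congr fun g hg => ?_
  rw [h g hg g' hg', mul_comm]

theorem coeff_mul_eq_zero_of_forall_mul_ne [Semiring R] [Mul G] {α β : MonoidAlgebra R G} {g : G}
    (h : ∀ a ∈ α.coeff.support, ∀ b ∈ β.coeff.support, a * b ≠ g) : (α * β).coeff g = 0 := by
  classical
  refine Finsupp.notMem_support_iff.1 fun hg => ?_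
  obtain ⟨a, ha, b, hb, hab⟩ := Finset.mem_mul.1 (support_coeff_mul_subset α β hg)
  exact h a ha b hb hab

theorem mul_comm_of_mem_symmetricSet_of_mul_eq_mul_inv [CommRing R] [Group G]
    {α β : MonoidAlgebra R G} {S T : Set G} (hα : α ∈ symmetricSet R G)
    (hαS : ∀ g ∈ α.coeff.support, g ∈ S) (hβT : ∀ g ∈ β.coeff.support, g ∈ T)
    (hST : ∀ b ∈ S, ∀ c ∈ T, b * c = c * b⁻¹) : α * β = β * α := by
  rw [mul_def, mul_def (x := β), Finsupp.sum_comm]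
  refine Finsupp.sum_congr fun c hc => ?_
  refine Finset.sum_equiv (Equiv.inv G) (fun b => ?_) (fun b hb => ?_)
  · rw [Equiv.inv_apply, Finsupp.mem_support_iff, Finsupp.mem_support_iff, hα b]
  · simp only [Equiv.inv_apply]
    rw [hST b (hαS b hb) c (hβT c hc), hα b, mul_comm]

open Classical in
noncomputable def restrict [Semiring R] (S : Set G) (α : MonoidAlgebra R G) : MonoidAlgebra R G :=
  ofCoeff (α.coeff.filter (· ∈ S))

theorem mem_of_mem_support_coeff_restrict [Semiring R] {S : Set G} {α : MonoidAlgebra R G} {g : G}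
    (hg : g ∈ (restrict S α).coeff.support) : g ∈ S := by
  classical
  rw [restrict, coeff_ofCoeff, Finsupp.support_filter, Finset.mem_filter] at hg
  exact hg.2

theorem restrict_add_restrict_compl [Semiring R] (S : Set G) (α : MonoidAlgebra R G) :
    restrict S α + restrict Sᶜ α = α := by
  ext g
  by_cases hg : g ∈ S <;> simp [restrict, hg]

theorem restrict_mem_symmetricSet [CommRing R] [Group G] {S : Set G} (hS : ∀ g ∈ S, g⁻¹ ∈ S)
    {α : MonoidAlgebra R G} (hα : α ∈ symmetricSet R G) : restrict S α ∈ symmetricSet R G := by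
  classical
  intro g
  rw [restrict, coeff_ofCoeff, Finsupp.filter_apply, Finsupp.filter_apply]
  by_cases hg : g ∈ S
  · rw [if_pos hg, if_pos (hS g hg), hα g]
  · rw [if_neg hg, if_neg fun h => hg (inv_inv g ▸ hS g⁻¹ h)]

theorem coeff_mul_eq_zero_of_index_two [Semiring R] [Group G] {B : Subgroup G}
    (hBidx : B.index = 2) {μ ν : MonoidAlgebra R G}
    (hμ : ∀ g ∈ μ.coeff.support, g ∉ B) (hν : ∀ g ∈ ν.coeff.support, g ∉ B) {g : G}
    (hg : g ∉ B) : (μ * ν).coeff g = 0 :=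
  coeff_mul_eq_zero_of_forall_mul_ne fun a ha b hb hab =>
    hg (hab ▸ (Subgroup.mul_mem_iff_of_index_two hBidx).2 (iff_of_false (hμ a ha) (hν b hb)))

section Symmetric

variable [CommRing R] [Group G] {B : Subgroup G}

theorem commutator_eq_commutator_restrict_compl (hBab : ∀ a ∈ B, ∀ b ∈ B, a * b = b * a)
    (htwist : ∀ b ∈ B, ∀ c ∉ B, b * c = c * b⁻¹) {α β : MonoidAlgebra R G}
    (hα : α ∈ symmetricSet R G) (hβ : β ∈ symmetricSet R G) :
    α * β - β * α = restrict (↑B)ᶜ α * restrict (↑B)ᶜ β - restrict (↑B)ᶜ β * restrict (↑B)ᶜ α := by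
  have hB : ∀ g ∈ (B : Set G), g⁻¹ ∈ (B : Set G) := fun g => B.inv_mem
  have hcomm_in : restrict B α * restrict B β = restrict B β * restrict B α :=
    mul_comm_of_forall_mem_support_commute fun g hg g' hg' =>
      hBab g (mem_of_mem_support_coeff_restrict hg) g' (mem_of_mem_support_coeff_restrict hg')
  have hcomm_out {μ ν : MonoidAlgebra R G} (hμ : μ ∈ symmetricSet R G) :
      restrict B μ * restrict (↑B)ᶜ ν = restrict (↑B)ᶜ ν * restrict B μ :=
    mul_comm_of_mem_symmetricSet_of_mul_eq_mul_inv (restrict_mem_symmetricSet hB hμ)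
      (fun _ => mem_of_mem_support_coeff_restrict) (fun _ => mem_of_mem_support_coeff_restrict)
      htwist
  conv_lhs => rw [← restrict_add_restrict_compl B α, ← restrict_add_restrict_compl B β]
  simp only [add_mul, mul_add, hcomm_in, hcomm_out hα, hcomm_out hβ]
  abel

theorem coeff_commutator_eq_zero_of_notMem (hBab : ∀ a ∈ B, ∀ b ∈ B, a * b = b * a)
    (hBidx : B.index = 2) (htwist : ∀ b ∈ B, ∀ c ∉ B, b * c = c * b⁻¹)
    {α β : MonoidAlgebra R G} (hα : α ∈ symmetricSet R G) (hβ : β ∈ symmetricSet R G) {g : G}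
    (hg : g ∉ B) : (α * β - β * α).coeff g = 0 := by
  have hout {μ : MonoidAlgebra R G} : ∀ g ∈ (restrict (↑B)ᶜ μ).coeff.support, g ∉ B :=
    fun _ => mem_of_mem_support_coeff_restrict
  rw [commutator_eq_commutator_restrict_compl hBab htwist hα hβ, coeff_sub, Finsupp.sub_apply,
    coeff_mul_eq_zero_of_index_two hBidx hout hout hg,
    coeff_mul_eq_zero_of_index_two hBidx hout hout hg, sub_zero]

end Symmetric

end MonoidAlgebra

theorem lie_metabelian_of_abelian_index_two_general (R G : Type*) [CommRing R] [Group G]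
    (B : Subgroup G) (x : G)
    (hBab : ∀ a ∈ B, ∀ b ∈ B, a * b = b * a)
    (hBidx : B.index = 2)
    (hx : orderOf x = 4)
    (hconj : ∀ b ∈ B, x⁻¹ * b * x = b⁻¹) :
    IsLieMetabelianSet (symmetricSet R G) := by
  have hxB : x ∉ B :=
    Subgroup.notMem_of_conj_eq_inv hconj (pow_ne_one_of_lt_orderOf two_ne_zero (by omega))
  have htwist : ∀ b ∈ B, ∀ c ∉ B, b * c = c * b⁻¹ := fun b hb c hc =>
    Subgroup.mul_eq_mul_inv_of_index_two hBab hBidx hxB hconj hb hc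
  have hbracket {α β : MonoidAlgebra R G} (hα : α ∈ symmetricSet R G) (hβ : β ∈ symmetricSet R G) :
      ∀ g ∈ (α * β - β * α).coeff.support, g ∈ B := fun g hg => by
    by_contra hgB
    exact Finsupp.mem_support_iff.1 hg
      (MonoidAlgebra.coeff_commutator_eq_zero_of_notMem hBab hBidx htwist hα hβ hgB)
  intro a ha b hb c hc d hd
  rw [sub_eq_zero]
  exact MonoidAlgebra.mul_comm_of_forall_mem_support_commute fun g hg g' hg' =>
    hBab g (hbracket ha hb g hg) g' (hbracket hc hd g' hg')

theorem lie_metabelian_of_abelian_index_two (R G : Type*) [CommRing R] [CharZero R] [Group G]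
    (B : Subgroup G) (x : G)
    (hBab : ∀ a ∈ B, ∀ b ∈ B, a * b = b * a)
    (hBidx : B.index = 2)
    (hx : orderOf x = 4)
    (hconj : ∀ b ∈ B, x⁻¹ * b * x = b⁻¹) :
    IsLieMetabelianSet (symmetricSet R G) :=
  lie_metabelian_of_abelian_index_two_general R G B x hBab hBidx hx hconj
end

section
/- Let R be a commutative ring with unity of characteristic 0 and G a group. If the center Z(G) of G equals {g ∈ G : g² = 1} and Z(G) has index 4 in G, then the set RG⁺ of symmetric elements of the group ring RG with respect to the classical involution is Lie metabelian. -/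
/-!
Every `g` squares into `Z = Z(G)`: `G/Z` has order 4 and is not cyclic, so it is a Klein
four-group. As `Z = {z | z² = 1}`, this gives `g⁴ = 1`, hence `ĝ := g + g⁻¹ = (1 + g²) g` with
`1 + g²` central. The symmetric elements are spanned by the `ĝ` and by central elements, so it
suffices to show `⁅⁅ĝ, ĥ⁆, ⁅k̂, l̂⁆⁆ = 0`. The key identity is `(1 + (xy)²) ⁅x̂, ŷ⁆ = 0`, which
comes from `(1 + x²)(1 + y²)(1 - x²y²) = 0`. Commutators being central, `⁅ĝ, ĥ⁆` is a central
multiple of `gh`, which settles the case where `gh` and `kl` commute. Otherwise, if `g, h` do not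
commute, `ḡ, h̄, ḡh̄` are the three nontrivial cosets of `Z` and the coset of `kl` is `ḡ` or `h̄`;
so the factor `1 + g²` or `1 + h²` of `⁅ĝ, ĥ⁆` equals `1 + (kl)²` and kills `⁅k̂, l̂⁆`.
-/

open MonoidAlgebra

attribute [local instance] LieRing.ofAssociativeRing

section RingCommutator

variable {S : Type*} [Ring S]

theorem isLieMetabelianSet_iff {X : Set S} :
    IsLieMetabelianSet X ↔ ∀ a ∈ X, ∀ b ∈ X, ∀ c ∈ X, ∀ d ∈ X, ⁅⁅a, b⁆, ⁅c, d⁆⁆ = 0 :=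
  Iff.rfl

theorem IsLieMetabelianSet.mono {X Y : Set S} (hXY : X ⊆ Y) (hY : IsLieMetabelianSet Y) :
    IsLieMetabelianSet X :=
  fun a ha b hb c hc d hd => hY a (hXY ha) b (hXY hb) c (hXY hc) d (hXY hd)

theorem IsLieMetabelianSet.union_center {X : Set S} (hX : IsLieMetabelianSet X) :
    IsLieMetabelianSet (X ∪ Subring.center S) := by
  have lie_cases : ∀ a ∈ X ∪ Subring.center S, ∀ b ∈ X ∪ Subring.center S,
      (a ∈ X ∧ b ∈ X) ∨ ⁅a, b⁆ = 0 := by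
    rintro a (ha | ha) b (hb | hb)
    · exact Or.inl ⟨ha, hb⟩
    all_goals refine Or.inr (commute_iff_lie_eq.mp ?_)
    · exact Subring.mem_center_iff.mp hb a
    · exact (Subring.mem_center_iff.mp ha b).symm
    · exact Subring.mem_center_iff.mp hb a
  rw [isLieMetabelianSet_iff] at hX ⊢
  intro a ha b hb c hc d hd
  rcases lie_cases a ha b hb with ⟨ha, hb⟩ | hab
  · rcases lie_cases c hc d hd with ⟨hc, hd⟩ | hcd
    · exact hX a ha b hb c hc d hd
    · rw [hcd, lie_zero]
  · rw [hab, zero_lie]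

theorem IsLieMetabelianSet.span {R : Type*} [CommRing R] [Algebra R S] {X : Set S}
    (hX : IsLieMetabelianSet X) : IsLieMetabelianSet (Submodule.span R X : Set S) := by
  have lie_mem : ∀ Y : Set S, ∀ a ∈ Submodule.span R Y, ∀ b ∈ Submodule.span R Y,
      ⁅a, b⁆ ∈ Submodule.span R (Set.image2 (⁅·, ·⁆) Y Y) := by
    intro Y a ha b hb
    have := Submodule.apply_mem_map₂ (LieAlgebra.ad R S : S →ₗ[R] Module.End R S) ha hb
    rwa [Submodule.map₂_span_span] at this
  have span_eq_bot : Submodule.span R (Set.image2 (⁅·, ·⁆) (Set.image2 (⁅·, ·⁆) X X)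
      (Set.image2 (⁅·, ·⁆) X X)) = ⊥ := by
    rw [Submodule.span_eq_bot]
    rintro _ ⟨_, ⟨a, ha, b, hb, rfl⟩, _, ⟨c, hc, d, hd, rfl⟩, rfl⟩
    exact hX a ha b hb c hc d hd
  intro a ha b hb c hc d hd
  have := lie_mem _ _ (lie_mem X a ha b hb) _ (lie_mem X c hc d hd)
  rwa [span_eq_bot, Submodule.mem_bot] at this

theorem lie_mul_left_of_mem_center {u : S} (hu : u ∈ Subring.center S) (a b : S) :
    ⁅u * a, b⁆ = u * ⁅a, b⁆ := by
  rw [Ring.lie_def, Ring.lie_def, mul_sub, mul_assoc, ← mul_assoc b,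
    Subring.mem_center_iff.mp hu b, mul_assoc]

theorem lie_mul_right_of_mem_center {u : S} (hu : u ∈ Subring.center S) (a b : S) :
    ⁅a, u * b⁆ = u * ⁅a, b⁆ := by
  rw [← lie_skew, lie_mul_left_of_mem_center hu, ← mul_neg, lie_skew]

theorem lie_mul_mul_of_mem_center {u v : S} (hu : u ∈ Subring.center S)
    (hv : v ∈ Subring.center S) (a b : S) : ⁅u * a, v * b⁆ = u * v * ⁅a, b⁆ := by
  rw [lie_mul_left_of_mem_center hu, lie_mul_right_of_mem_center hv, mul_assoc]

theorem one_add_mul_one_add_mul_one_sub_mul {u v : S} (hu : u * u = 1) (hv : v * v = 1)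
    (huv : Commute u v) : (1 + u) * (1 + v) * (1 - u * v) = 0 := by
  have : (1 + v) * (u * v) = u * (1 + v) := by
    rw [add_mul, one_mul, ← mul_assoc, ← huv.eq, mul_assoc, hv, mul_one, mul_add, mul_one,
      add_comm]
  rw [mul_sub, mul_one, mul_assoc, this, ← mul_assoc, add_mul 1 u u, one_mul, hu, add_comm u,
    sub_self]

end RingCommutator

section QuotientCenter

open scoped commutatorElement

variable {G : Type*} [Group G]

theorem isKleinFour_quotient_center (hidx : (Subgroup.center G).index = 4) :
    IsKleinFour (G ⧸ Subgroup.center G) := by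
  have hcard : Nat.card (G ⧸ Subgroup.center G) = 2 ^ 2 := by
    rw [← Subgroup.index_eq_card, hidx]; norm_num
  have not_cyclic : ¬IsCyclic (G ⧸ Subgroup.center G) := by
    intro hcyc
    have := isMulCommutative_of_isCyclic_quotient_center_self G
    rw [Subgroup.center_eq_top, Subgroup.index_top] at hidx
    exact absurd hidx (by norm_num)
  exact ⟨by rw [hcard]; norm_num,
    (not_isCyclic_iff_exponent_eq_prime Nat.prime_two hcard).mp not_cyclic⟩

theorem sq_eq_sq_of_mk_eq (hZ : (Subgroup.center G : Set G) = {g : G | g ^ 2 = 1}) {x y : G}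
    (hxy : (x : G ⧸ Subgroup.center G) = y) : x ^ 2 = y ^ 2 := by
  have hz := QuotientGroup.eq.mp hxy
  calc x ^ 2 = x ^ 2 * (x⁻¹ * y) ^ 2 := by rw [hZ.subset hz, mul_one]
    _ = y ^ 2 := by
      rw [← (show Commute x (x⁻¹ * y) from Subgroup.mem_center_iff.mp hz x).mul_pow,
        mul_inv_cancel_left]

theorem sq_mul_comm_of_sq_mem_center {x y : G} (hxy : (x * y) ^ 2 ∈ Subgroup.center G) :
    (y * x) ^ 2 = (x * y) ^ 2 :=
  calc (y * x) ^ 2 = x⁻¹ * ((x * y) ^ 2 * x) := by simp only [pow_two]; group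
    _ = (x * y) ^ 2 := by rw [← Subgroup.mem_center_iff.mp hxy x, inv_mul_cancel_left]

theorem mk_ne_one_and_ne_of_not_commute {x y : G} (hxy : ¬Commute x y) :
    (x : G ⧸ Subgroup.center G) ≠ 1 ∧ (y : G ⧸ Subgroup.center G) ≠ 1 ∧
      (x : G ⧸ Subgroup.center G) ≠ y := by
  refine ⟨fun hx => hxy ?_, fun hy => hxy ?_, fun h => hxy ?_⟩
  · exact (Subgroup.mem_center_iff.mp ((QuotientGroup.eq_one_iff x).mp hx) y).symm
  · exact Subgroup.mem_center_iff.mp ((QuotientGroup.eq_one_iff y).mp hy) x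
  · have hz : Commute x (x⁻¹ * y) := Subgroup.mem_center_iff.mp (QuotientGroup.eq.mp h) x
    simpa using (Commute.refl x).mul_right hz

variable [IsKleinFour (G ⧸ Subgroup.center G)]

theorem sq_mem_center (g : G) : g ^ 2 ∈ Subgroup.center G := by
  rw [← QuotientGroup.eq_one_iff, QuotientGroup.mk_pow, pow_two, IsKleinFour.mul_self]

theorem commutatorElement_mem_center (x y : G) : ⁅x, y⁆ ∈ Subgroup.center G := by
  have := IsKleinFour.isMulCommutative (G := G ⧸ Subgroup.center G)
  rw [← QuotientGroup.eq_one_iff, ← QuotientGroup.mk'_apply, map_commutatorElement,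
    commutatorElement_eq_one_iff_commute]
  exact this.is_comm.comm _ _

theorem pow_four_eq_one (hZ : (Subgroup.center G : Set G) = {g : G | g ^ 2 = 1}) (g : G) :
    g ^ 4 = 1 := by
  rw [show 4 = 2 * 2 from rfl, pow_mul]
  exact hZ.subset (sq_mem_center g)

theorem mk_eq_or_mk_eq_of_not_commute {g h y : G} (hgh : ¬Commute g h)
    (hy : ¬Commute (g * h) y) :
    (y : G ⧸ Subgroup.center G) = g ∨ (y : G ⧸ Subgroup.center G) = h := by
  obtain ⟨hg, hh, hgh⟩ := mk_ne_one_and_ne_of_not_commute hgh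
  obtain ⟨-, hy, hghy⟩ := mk_ne_one_and_ne_of_not_commute hy
  by_contra! hne
  exact hghy (IsKleinFour.eq_mul_of_ne_all hg hh hgh hy hne.1 hne.2).symm

end QuotientCenter

section GroupAlgebra

open scoped commutatorElement

variable (R : Type*) [CommRing R] {G : Type*} [Group G]

noncomputable def invSum (g : G) : MonoidAlgebra R G := of R G g + of R G g⁻¹

theorem sum_of_pair_inv_mem [DecidableEq G] (g : G) :
    ∑ x ∈ {g, g⁻¹}, of R G x ∈ Set.range (invSum R) ∪ of R G '' {g | g⁻¹ = g} := by
  by_cases hg : g⁻¹ = g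
  · exact Or.inr ⟨g, hg, by
      rw [hg, Finset.insert_eq_of_mem (Finset.mem_singleton_self g), Finset.sum_singleton]⟩
  · exact Or.inl ⟨g, (Finset.sum_pair (Ne.symm hg)).symm⟩

theorem coeff_sub_smul_sum_of_pair_inv [DecidableEq G] {α : MonoidAlgebra R G}
    (hα : α ∈ symmetricSet R G) (g x : G) :
    (α - α.coeff g • ∑ y ∈ {g, g⁻¹}, of R G y).coeff x =
      if x ∈ ({g, g⁻¹} : Finset G) then 0 else α.coeff x := by
  simp only [coeff_sub, coeff_smul, coeff_sum, of_apply, coeff_single, Finsupp.sub_apply,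
    Finsupp.smul_apply, Finsupp.finsetSum_apply, Finsupp.single_apply, Finset.sum_ite_eq',
    smul_eq_mul]
  split_ifs with hx
  · rcases Finset.mem_insert.mp hx with rfl | hx
    · rw [mul_one, sub_self]
    · rw [Finset.mem_singleton.mp hx, hα, mul_one, sub_self]
  · rw [mul_zero, sub_zero]

theorem symmetricSet_subset_span :
    symmetricSet R G ⊆
      Submodule.span R (Set.range (invSum R) ∪ of R G '' {g | g⁻¹ = g}) := by
  classical
  suffices ∀ s : Finset G, ∀ α ∈ symmetricSet R G, α.coeff.support = s →
      α ∈ Submodule.span R (Set.range (invSum R) ∪ of R G '' {g | g⁻¹ = g}) from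
    fun α hα => this _ α hα rfl
  intro s
  induction s using Finset.strongInduction with
  | H s ih =>
  rintro α hα rfl
  rcases α.coeff.support.eq_empty_or_nonempty with hs | ⟨g, hg⟩
  · rw [Finsupp.support_eq_empty, coeff_eq_zero] at hs
    rw [hs]
    exact zero_mem _
  set β := α - α.coeff g • ∑ y ∈ {g, g⁻¹}, of R G y
  have hβ_coeff := coeff_sub_smul_sum_of_pair_inv R hα g
  have hβ : β ∈ symmetricSet R G := by
    intro x
    have hx : x⁻¹ ∈ ({g, g⁻¹} : Finset G) ↔ x ∈ ({g, g⁻¹} : Finset G) := by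
      simp only [Finset.mem_insert, Finset.mem_singleton, inv_eq_iff_eq_inv, inv_inv, or_comm]
    simp only [β, hβ_coeff, hx, hα x]
  have hβ_support : β.coeff.support ⊂ α.coeff.support := by
    refine (Finset.ssubset_iff_of_subset fun x hx => ?_).mpr ⟨g, hg, ?_⟩
    · rw [Finsupp.mem_support_iff, hβ_coeff] at hx
      rw [Finsupp.mem_support_iff]
      split_ifs at hx
      · exact absurd rfl hx
      · exact hx
    · rw [Finsupp.mem_support_iff, hβ_coeff, if_pos (Finset.mem_insert_self g _), not_not]
  rw [← sub_add_cancel α (α.coeff g • ∑ y ∈ {g, g⁻¹}, of R G y)]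
  exact add_mem (ih _ hβ_support β hβ rfl)
    (Submodule.smul_mem _ _ (Submodule.subset_span (sum_of_pair_inv_mem R g)))

theorem of_mem_center {z : G} (hz : z ∈ Subgroup.center G) :
    of R G z ∈ Subring.center (MonoidAlgebra R G) :=
  Subring.mem_center_iff.mpr fun x =>
    (MonoidAlgebra.of_commute (fun g => (Subgroup.mem_center_iff.mp hz g).symm) x).eq.symm

theorem of_inv_eq_of_sq_mul {g : G} (hg : g ^ 4 = 1) :
    of R G g⁻¹ = of R G (g ^ 2) * of R G g := by
  rw [← map_mul, ← pow_succ, inv_eq_of_mul_eq_one_right (by rw [← pow_succ', hg])]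

theorem invSum_eq_mul_of {g : G} (hg : g ^ 4 = 1) :
    invSum R g = (1 + of R G (g ^ 2)) * of R G g := by
  rw [invSum, of_inv_eq_of_sq_mul R hg, add_mul, one_mul]

theorem lie_of_of (x y : G) :
    ⁅of R G x, of R G y⁆ = (1 - of R G ⁅y, x⁆) * of R G (x * y) := by
  rw [Ring.lie_def, sub_mul, one_mul, ← map_mul, ← map_mul, ← map_mul, commutatorElement_def]
  congr 2
  group

end GroupAlgebra

section KleinFourQuotient

open scoped commutatorElement

variable (R : Type*) [CommRing R] {G : Type*} [Group G] [IsKleinFour (G ⧸ Subgroup.center G)]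

theorem one_add_of_sq_mem_center (g : G) :
    1 + of R G (g ^ 2) ∈ Subring.center (MonoidAlgebra R G) :=
  add_mem (one_mem _) (of_mem_center R (sq_mem_center g))

theorem lie_invSum_invSum (hZ : (Subgroup.center G : Set G) = {g : G | g ^ 2 = 1}) (x y : G) :
    ⁅invSum R x, invSum R y⁆ =
      (1 + of R G (x ^ 2)) * (1 + of R G (y ^ 2)) * ⁅of R G x, of R G y⁆ := by
  rw [invSum_eq_mul_of R (pow_four_eq_one hZ x), invSum_eq_mul_of R (pow_four_eq_one hZ y),
    lie_mul_mul_of_mem_center (one_add_of_sq_mem_center R x) (one_add_of_sq_mem_center R y)]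

theorem one_add_of_sq_mul_lie_invSum (hZ : (Subgroup.center G : Set G) = {g : G | g ^ 2 = 1})
    (x y : G) : (1 + of R G ((x * y) ^ 2)) * ⁅invSum R x, invSum R y⁆ = 0 := by
  set U := of R G (x ^ 2)
  set V := of R G (y ^ 2)
  have hU : U ∈ Subring.center (MonoidAlgebra R G) := of_mem_center R (sq_mem_center x)
  have hV : V ∈ Subring.center (MonoidAlgebra R G) := of_mem_center R (sq_mem_center y)
  have hU2 : U * U = 1 := by rw [← map_mul, ← pow_two, hZ.subset (sq_mem_center x), map_one]
  have hV2 : V * V = 1 := by rw [← map_mul, ← pow_two, hZ.subset (sq_mem_center y), map_one]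
  -- `(1 + (xy)²) xy = xy + (xy)⁻¹`, and `(xy)⁻¹ = y⁻¹ x⁻¹ = (V y) (U x)`
  have key : (1 + of R G ((x * y) ^ 2)) * ⁅of R G x, of R G y⁆ =
      (1 - U * V) * ⁅of R G x, of R G y⁆ :=
    calc (1 + of R G ((x * y) ^ 2)) * ⁅of R G x, of R G y⁆
        = invSum R (x * y) - invSum R (y * x) := by
          rw [invSum_eq_mul_of R (pow_four_eq_one hZ _), invSum_eq_mul_of R (pow_four_eq_one hZ _),
            sq_mul_comm_of_sq_mem_center (sq_mem_center _), Ring.lie_def, mul_sub, map_mul,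
            map_mul]
      _ = ⁅of R G x, of R G y⁆ + ⁅V * of R G y, U * of R G x⁆ := by
          simp only [invSum, mul_inv_rev, map_mul, of_inv_eq_of_sq_mul R (pow_four_eq_one hZ _),
            Ring.lie_def]
          abel
      _ = (1 - U * V) * ⁅of R G x, of R G y⁆ := by
          rw [lie_mul_mul_of_mem_center hV hU, ← lie_skew, Subring.mem_center_iff.mp hU V]
          noncomm_ring
  rw [lie_invSum_invSum R hZ, ← mul_assoc,
    ← Subring.mem_center_iff.mp (one_add_of_sq_mem_center R (x * y)), mul_assoc, key,
    ← mul_assoc, one_add_mul_one_add_mul_one_sub_mul hU2 hV2 (Subring.mem_center_iff.mp hU V).symm,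
    zero_mul]

theorem isLieMetabelianSet_range_invSum
    (hZ : (Subgroup.center G : Set G) = {g : G | g ^ 2 = 1}) :
    IsLieMetabelianSet (Set.range (invSum R : G → MonoidAlgebra R G)) := by
  rw [isLieMetabelianSet_iff]
  rintro _ ⟨g, rfl⟩ _ ⟨h, rfl⟩ _ ⟨k, rfl⟩ _ ⟨l, rfl⟩
  have hc := one_add_of_sq_mem_center R (G := G)
  by_cases hgh : Commute g h
  · rw [lie_invSum_invSum R hZ g h, commute_iff_lie_eq.mp (hgh.map (of R G)), mul_zero, zero_lie]
  by_cases hghkl : Commute (g * h) (k * l)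
  · have hε : ∀ x y : G, 1 - of R G ⁅y, x⁆ ∈ Subring.center (MonoidAlgebra R G) :=
      fun x y => sub_mem (one_mem _) (of_mem_center R (commutatorElement_mem_center y x))
    rw [lie_invSum_invSum R hZ g h, lie_invSum_invSum R hZ k l, lie_of_of, lie_of_of,
      ← mul_assoc, ← mul_assoc,
      lie_mul_mul_of_mem_center (mul_mem (mul_mem (hc g) (hc h)) (hε g h))
        (mul_mem (mul_mem (hc k) (hc l)) (hε k l)),
      commute_iff_lie_eq.mp (hghkl.map (of R G)), mul_zero]
  -- move the factor `1 + g²` (resp. `1 + h²`), which equals `1 + (kl)²`, onto `⁅k̂, l̂⁆`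
  rcases mk_eq_or_mk_eq_of_not_commute hgh hghkl with hkl | hkl
  · rw [invSum_eq_mul_of R (pow_four_eq_one hZ g), lie_mul_left_of_mem_center (hc g),
      lie_mul_left_of_mem_center (hc g), ← lie_mul_right_of_mem_center (hc g),
      ← sq_eq_sq_of_mk_eq hZ hkl, one_add_of_sq_mul_lie_invSum R hZ, lie_zero]
  · rw [invSum_eq_mul_of R (pow_four_eq_one hZ h), lie_mul_right_of_mem_center (hc h),
      lie_mul_left_of_mem_center (hc h), ← lie_mul_right_of_mem_center (hc h),
      ← sq_eq_sq_of_mk_eq hZ hkl, one_add_of_sq_mul_lie_invSum R hZ, lie_zero]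

end KleinFourQuotient

theorem lie_metabelian_of_center_eq_involutions_general (R G : Type*) [CommRing R]
    [Group G]
    (hZ : (Subgroup.center G : Set G) = {g : G | g ^ 2 = 1})
    (hidx : (Subgroup.center G).index = 4) :
    IsLieMetabelianSet (symmetricSet R G) := by
  have := isKleinFour_quotient_center hidx
  have involutions_central : of R G '' {g | g⁻¹ = g} ⊆ Subring.center (MonoidAlgebra R G) := by
    rintro _ ⟨g, hg, rfl⟩
    exact of_mem_center R
      (hZ.superset (by rw [Set.mem_ofPred_eq, pow_two, mul_eq_one_iff_eq_inv, hg]))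
  have generators := (isLieMetabelianSet_range_invSum R hZ).union_center
  exact (generators.span (R := R)).mono <| (symmetricSet_subset_span R).trans <|
    Submodule.span_mono (Set.union_subset_union_right _ involutions_central)

theorem lie_metabelian_of_center_eq_involutions (R G : Type*) [CommRing R] [CharZero R]
    [Group G]
    (hZ : (Subgroup.center G : Set G) = {g : G | g ^ 2 = 1})
    (hidx : (Subgroup.center G).index = 4) :
    IsLieMetabelianSet (symmetricSet R G) :=
  lie_metabelian_of_center_eq_involutions_general R G hZ hidx
end

section
/- Let R be a commutative ring with unity and G a group. Then [RG⁺, RG⁺] ⊆ RǦ; that is, for all symmetric elements α, β ∈ RG⁺ the additive commutator [α,β] = αβ − βα lies in the R-submodule of the group ring RG generated by the set Ǧ = {g − g⁻¹ : g ∈ G}. -/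
/-!
Write `γ*` for the image of `γ` under the classical involution `g ↦ g⁻¹`. It is an
anti-automorphism of `RG`, so for symmetric `α, β` we get `βα = β*α* = (αβ)*`, whence
`[α, β] = αβ - (αβ)*`. Finally `γ - γ*` lies in `RǦ` for every `γ`, since on a basis element
`r g` it equals `r (g - g⁻¹)`.
-/

open MonoidAlgebra

noncomputable def classicalInvolution (R G : Type*) [Semiring R] [Group G] :
    MonoidAlgebra R G → MonoidAlgebra R G :=
  mapDomain fun g => g⁻¹

section Semiring

variable {R G : Type*} [Semiring R] [Group G]

lemma classicalInvolution_single (g : G) (r : R) :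
    classicalInvolution R G (single g r) = single g⁻¹ r :=
  mapDomain_single

lemma classicalInvolution_add (x y : MonoidAlgebra R G) :
    classicalInvolution R G (x + y) = classicalInvolution R G x + classicalInvolution R G y :=
  mapDomain_add _ x y

lemma coeff_classicalInvolution (γ : MonoidAlgebra R G) (g : G) :
    (classicalInvolution R G γ).coeff g = γ.coeff g⁻¹ :=
  Finsupp.mapDomain_equiv_apply (f := Equiv.inv G) ..

lemma classicalInvolution_eq_self_iff (γ : MonoidAlgebra R G) :
    classicalInvolution R G γ = γ ↔ ∀ g : G, γ.coeff g⁻¹ = γ.coeff g := by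
  simp only [MonoidAlgebra.ext_iff, Finsupp.ext_iff, coeff_classicalInvolution]

end Semiring

lemma classicalInvolution_mul {R G : Type*} [CommSemiring R] [Group G]
    (x y : MonoidAlgebra R G) :
    classicalInvolution R G (x * y) = classicalInvolution R G y * classicalInvolution R G x := by
  induction x using MonoidAlgebra.induction_linear with
  | zero => simp [classicalInvolution]
  | add x₁ x₂ h₁ h₂ =>
    rw [add_mul, classicalInvolution_add, h₁, h₂, classicalInvolution_add, mul_add]
  | single g r =>
    induction y using MonoidAlgebra.induction_linear with
    | zero => simp [classicalInvolution]
    | add y₁ y₂ h₁ h₂ =>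
      rw [mul_add, classicalInvolution_add, h₁, h₂, classicalInvolution_add, add_mul]
    | single h s =>
      simp only [single_mul_single, classicalInvolution_single, mul_inv_rev, mul_comm r s]

lemma sub_classicalInvolution_mem_span_checkSet {R G : Type*} [CommRing R] [Group G]
    (γ : MonoidAlgebra R G) :
    γ - classicalInvolution R G γ ∈ Submodule.span R (checkSet R G) := by
  induction γ using MonoidAlgebra.induction_linear with
  | zero => simp [classicalInvolution]
  | add x y hx hy =>
    rw [classicalInvolution_add, add_sub_add_comm]
    exact add_mem hx hy
  | single g r =>
    have hsingle :
        single g r - classicalInvolution R G (single g r) = r • (of R G g - of R G g⁻¹) := by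
      simp [classicalInvolution_single, smul_sub]
    rw [hsingle]
    exact Submodule.smul_mem _ r (Submodule.subset_span ⟨g, rfl⟩)

theorem commutator_symmetric_mem_span_check (R G : Type*) [CommRing R] [Group G]
    (α : MonoidAlgebra R G) (hα : α ∈ symmetricSet R G)
    (β : MonoidAlgebra R G) (hβ : β ∈ symmetricSet R G) :
    α * β - β * α ∈ Submodule.span R (checkSet R G) := by
  have hα' := (classicalInvolution_eq_self_iff α).mpr hα
  have hβ' := (classicalInvolution_eq_self_iff β).mpr hβ
  have hβα : β * α = classicalInvolution R G (α * β) := by rw [classicalInvolution_mul, hα', hβ']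
  rw [hβα]
  exact sub_classicalInvolution_mem_span_checkSet (α * β)
end

section
/- Let R be a commutative ring with unity of characteristic 0 and G a group such that the set RG⁺ of symmetric elements of RG is Lie metabelian, and let A = ⟨g ∈ G : g² = 1⟩. Then every element of A can be written in the form ab with a, b ∈ G satisfying a² = b² = 1. -/
/-! For involutions `a, b, c` of `G` the elements `a, b, c ∈ RG` are symmetric, and expanding
`[[c, a], [a, b]] = 0` gives `cb + acba + abac + baca = caba + acab + abca + bc`. In
characteristic `0` the group element `cb` must occur on the right, so `a` commutes with `b` or
with `c`, `b` commutes with `c`, or `abc = cba`; in each case `abc` is a product of two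
involutions. Applying this twice, `(pq)(rs) = p(qrs)` is again such a product, so products of two
involutions form a subgroup, which contains `A`. -/

open MonoidAlgebra

section Involutions

variable {G : Type*} [Group G] {a b c x : G}

lemma sq_eq_one_iff_inv_eq_self : a ^ 2 = 1 ↔ a⁻¹ = a := by
  rw [sq, inv_eq_iff_mul_eq_one]

lemma commute_of_mul_mul_eq_self (ha : a ^ 2 = 1) (h : a * x * a = x) : Commute a x :=
  calc a * x = a * x * a * a := by rw [mul_assoc (a * x), ← sq, ha, mul_one]
    _ = x * a := by rw [h]

lemma exists_involutions_eq_mul_mul_of_commute_or (ha : a ^ 2 = 1) (hb : b ^ 2 = 1)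
    (hc : c ^ 2 = 1) (h : Commute a b ∨ Commute a c ∨ a * b * c = c * b * a ∨ Commute b c) :
    ∃ p q : G, p ^ 2 = 1 ∧ q ^ 2 = 1 ∧ a * b * c = p * q := by
  simp only [sq_eq_one_iff_inv_eq_self] at ha hb hc ⊢
  rcases h with hab | hac | habc | hbc
  · exact ⟨a * b, c, by rw [mul_inv_rev, ha, hb, hab.eq], hc, rfl⟩
  · refine ⟨a * b * a, a * c, by simp only [mul_inv_rev, ha, hb, mul_assoc],
      by rw [mul_inv_rev, ha, hc, hac.eq], ?_⟩
    rw [← mul_assoc, mul_assoc (a * b) a a, inv_eq_iff_mul_eq_one.mp ha, mul_one]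
  · exact ⟨a * b * c, 1, by simp only [mul_inv_rev, ha, hb, hc, habc, mul_assoc], inv_one,
      (mul_one _).symm⟩
  · exact ⟨a, b * c, ha, by rw [mul_inv_rev, hb, hc, hbc.eq], (mul_assoc a b c)⟩

end Involutions

section GroupRing

variable {R G : Type*}

lemma eq_or_eq_or_eq_or_eq_of_of_add_eq [Semiring R] [CharZero R] [Monoid G]
    {x x₂ x₃ x₄ y₁ y₂ y₃ y₄ : G}
    (h : of R G x + of R G x₂ + of R G x₃ + of R G x₄ =
      of R G y₁ + of R G y₂ + of R G y₃ + of R G y₄) :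
    x = y₁ ∨ x = y₂ ∨ x = y₃ ∨ x = y₄ := by
  classical
  by_contra! hne
  -- the coefficient of `x` is a positive integer on the left and `0` on the right
  have hx := congr_arg (fun f => f.coeff x) h
  simp only [coeff_add, of_apply, coeff_single, Finsupp.add_apply, Finsupp.single_apply,
    if_neg hne.1.symm, if_neg hne.2.1.symm, if_neg hne.2.2.1.symm, if_neg hne.2.2.2.symm] at hx
  split_ifs at hx <;> norm_num at hx

variable [CommRing R] [Group G]

lemma of_mem_symmetricSet {g : G} (hg : g ^ 2 = 1) : of R G g ∈ symmetricSet R G := by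
  intro h
  classical
  simp only [of_apply, coeff_single, Finsupp.single_apply, eq_inv_iff_mul_eq_one,
    ← inv_eq_iff_mul_eq_one, sq_eq_one_iff_inv_eq_self.mp hg]

lemma commute_or_of_isLieMetabelianSet [CharZero R]
    (hmeta : IsLieMetabelianSet (symmetricSet R G)) {a b c : G}
    (ha : a ^ 2 = 1) (hb : b ^ 2 = 1) (hc : c ^ 2 = 1) :
    Commute a b ∨ Commute a c ∨ a * b * c = c * b * a ∨ Commute b c := by
  have hsymm {g : G} (hg : g ^ 2 = 1) := of_mem_symmetricSet (R := R) hg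
  have hsum :
      of R G (c * b) + of R G (a * c * b * a) + of R G (a * b * a * c) + of R G (b * a * c * a) =
        of R G (c * a * b * a) + of R G (a * c * a * b) + of R G (a * b * c * a) +
          of R G (b * c) := by
    have h := hmeta _ (hsymm hc) _ (hsymm ha) _ (hsymm ha) _ (hsymm hb)
    have haa : a * a = 1 := by rw [← sq, ha]
    simp only [← map_mul, mul_sub, sub_mul, ← mul_assoc] at h
    simp only [mul_assoc, haa, mul_one] at h
    rw [← sub_eq_zero, ← h]
    simp only [mul_assoc]
    abel
  rcases eq_or_eq_or_eq_or_eq_of_of_add_eq hsum with h | h | h | h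
  · exact .inl <| commute_of_mul_mul_eq_self ha <| .symm <|
      mul_left_cancel (a := c) (by rw [h]; simp only [mul_assoc])
  · exact .inr <| .inl <| commute_of_mul_mul_eq_self ha (mul_right_cancel h).symm
  · exact .inr <| .inr <| .inl <| by rw [h, mul_assoc _ a a, ← sq, ha, mul_one]
  · exact .inr <| .inr <| .inr h.symm

end GroupRing

theorem mem_A_eq_prod_two_involutions (R G : Type*) [CommRing R] [CharZero R] [Group G]
    (hmeta : IsLieMetabelianSet (symmetricSet R G))
    (g : G) (hg : g ∈ Subgroup.closure {g : G | g ^ 2 = 1}) :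
    ∃ a b : G, a ^ 2 = 1 ∧ b ^ 2 = 1 ∧ g = a * b := by
  have step {a b c : G} (ha : a ^ 2 = 1) (hb : b ^ 2 = 1) (hc : c ^ 2 = 1) :=
    exists_involutions_eq_mul_mul_of_commute_or ha hb hc
      (commute_or_of_isLieMetabelianSet hmeta ha hb hc)
  induction hg using Subgroup.closure_induction with
  | mem x hx => exact ⟨x, 1, hx, one_pow 2, (mul_one x).symm⟩
  | one => exact ⟨1, 1, one_pow 2, one_pow 2, (mul_one 1).symm⟩
  | mul x y _ _ ihx ihy =>
    obtain ⟨p, q, hp, hq, rfl⟩ := ihx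
    obtain ⟨r, s, hr, hs, rfl⟩ := ihy
    obtain ⟨u, v, hu, hv, huv⟩ := step hq hr hs
    obtain ⟨w, z, hw, hz, hwz⟩ := step hp hu hv
    exact ⟨w, z, hw, hz, by rw [← hwz, mul_assoc p u v, ← huv]; simp only [mul_assoc]⟩
  | inv x _ ihx =>
    obtain ⟨p, q, hp, hq, rfl⟩ := ihx
    exact ⟨q, p, hq, hp, by
      rw [mul_inv_rev, sq_eq_one_iff_inv_eq_self.mp hp, sq_eq_one_iff_inv_eq_self.mp hq]⟩
end
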